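/- Let (X,T) be a TDS and x ∈ X. If y is an FK-continuity point lying in the closure of the orbit {T^n x : n ≥ 0} of x, then x is an FK-continuity point and ρ_FK(x,y) = 0. -/

import Mathlib

/-! Matches compose: where the range of an `(n,δ₁)`-match of `x` and `w` meets the domain of an
`(n,δ₂)`-match of `w` and `z`, the two give an `(n,δ₁+δ₂)`-match of `x` and `z`, so `ρ_FK` is a
pseudometric. Shifting time by `k` matches `x` with `T^k x` at all but `k` of `n` times, so
`ρ_FK(x, T^k x) = 0` and hence `ρ_FK(x, z) ≤ ρ_FK(T^n x, T^n z)`. Pick `T^n x` close to `y`; by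
continuity of `T^n`, `T^n z` is close to `y` for `z` close to `x`, and FK-continuity at `y` bounds
`ρ_FK(T^n x, y) + ρ_FK(y, T^n z)`. -/

open Filter Topology MeasureTheory Set

namespace FKPaper

variable {X : Type*} [MetricSpace X]

/-- The maximal fit of an `(n,δ)`-match between the orbits of `x` and `z` under `T`:
the largest cardinality of the domain of an order-preserving bijection
`π : D → R`, with `D, R ⊆ {0,…,n-1}` and `dist (T^[i] x) (T^[π i] z) < δ` for `i ∈ D`. -/
noncomputable def maxFit (T : X → X) (δ : ℝ) (n : ℕ) (x z : X) : ℕ :=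
  sSup {k : ℕ | ∃ i j : Fin k → ℕ, StrictMono i ∧ StrictMono j ∧
    (∀ s, i s < n) ∧ (∀ s, j s < n) ∧ ∀ s, dist (T^[i s] x) (T^[j s] z) < δ}

/-- `f̄_{n,δ}(x,z) = 1 - (maximal fit of an (n,δ)-match of x and z)/n`. -/
noncomputable def fbarN (T : X → X) (δ : ℝ) (n : ℕ) (x z : X) : ℝ :=
  1 - (maxFit T δ n x z : ℝ) / n

/-- `f̄_δ(x,z) = limsup_{n→∞} f̄_{n,δ}(x,z)`. -/
noncomputable def fbar (T : X → X) (δ : ℝ) (x z : X) : ℝ :=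
  Filter.limsup (fun n => fbarN T δ n x z) Filter.atTop

/-- The Feldman–Katok pseudometric `ρ_FK(x,z) = inf {δ > 0 : f̄_δ(x,z) < δ}`. -/
noncomputable def rhoFK (T : X → X) (x z : X) : ℝ :=
  sInf {δ : ℝ | 0 < δ ∧ fbar T δ x z < δ}

/-- `x` is an FK-continuity point for `(X,T)`. -/
def FKContinuityPoint (T : X → X) (x : X) : Prop :=
  ∀ ε > 0, ∃ δ > 0, ∀ y : X, dist x y ≤ δ → rhoFK T x y ≤ ε

/-- The set of FK-continuity points. -/
def EqFK (T : X → X) : Set X := {x : X | FKContinuityPoint T x}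

end FKPaper

open FKPaper Filter Topology MeasureTheory Set

namespace FKPaper

variable {X : Type*} [MetricSpace X] {T : X → X} {δ δ₁ δ₂ : ℝ} {n k k₁ k₂ : ℕ} {x w z : X}

def HasMatchOfFit (T : X → X) (δ : ℝ) (n : ℕ) (x z : X) (k : ℕ) : Prop :=
  ∃ i j : Fin k → ℕ, StrictMono i ∧ StrictMono j ∧
    (∀ s, i s < n) ∧ (∀ s, j s < n) ∧ ∀ s, dist (T^[i s] x) (T^[j s] z) < δ

theorem hasMatchOfFit_zero : HasMatchOfFit T δ n x z 0 :=
  ⟨Fin.elim0, Fin.elim0, fun s => s.elim0, fun s => s.elim0, fun s => s.elim0, fun s => s.elim0,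
    fun s => s.elim0⟩

theorem HasMatchOfFit.le (h : HasMatchOfFit T δ n x z k) : k ≤ n := by
  obtain ⟨i, -, hi, -, hin, -⟩ := h
  exact Fin.le_of_injective (fun s => ⟨i s, hin s⟩) fun a b hab => hi.injective (Fin.mk.inj hab)

theorem HasMatchOfFit.mono {k' : ℕ} (h : HasMatchOfFit T δ n x z k) (hk : k' ≤ k) :
    HasMatchOfFit T δ n x z k' := by
  obtain ⟨i, j, hi, hj, hin, hjn, hd⟩ := h
  have hc : StrictMono (Fin.castLE hk) := fun _ _ h => h
  exact ⟨i ∘ Fin.castLE hk, j ∘ Fin.castLE hk, hi.comp hc, hj.comp hc,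
    fun _ => hin _, fun _ => hjn _, fun _ => hd _⟩

theorem HasMatchOfFit.symm (h : HasMatchOfFit T δ n x z k) : HasMatchOfFit T δ n z x k := by
  obtain ⟨i, j, hi, hj, hin, hjn, hd⟩ := h
  exact ⟨j, i, hj, hi, hjn, hin, fun s => dist_comm (T^[i s] x) _ ▸ hd s⟩

theorem hasMatchOfFit_comm : HasMatchOfFit T δ n x z k ↔ HasMatchOfFit T δ n z x k :=
  ⟨.symm, .symm⟩

theorem exists_strictMono_comp_eq_orderEmbOfFin {α : Type*} [LinearOrder α] {f : Fin k → α}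
    (hf : StrictMono f) {C : Finset α} (hC : C ⊆ Finset.univ.image f) :
    ∃ g : Fin C.card → Fin k, StrictMono g ∧ ∀ t, f (g t) = C.orderEmbOfFin rfl t := by
  have hpre : ∀ t, ∃ s, f s = C.orderEmbOfFin rfl t := fun t => by
    simpa using hC (C.orderEmbOfFin_mem rfl t)
  choose g hg using hpre
  refine ⟨g, fun a b hab => hf.lt_iff_lt.1 ?_, hg⟩
  rw [hg, hg]
  exact (C.orderEmbOfFin rfl).strictMono hab

/-- The range of the first match and the domain of the second share at least `k₁ + k₂ - n`
times in `[0, n)`; composing the matches there gives the new one. -/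
theorem HasMatchOfFit.trans (h₁ : HasMatchOfFit T δ₁ n x w k₁)
    (h₂ : HasMatchOfFit T δ₂ n w z k₂) : HasMatchOfFit T (δ₁ + δ₂) n x z (k₁ + k₂ - n) := by
  classical
  obtain ⟨i₁, j₁, hi₁, hj₁, hi₁n, hj₁n, hd₁⟩ := h₁
  obtain ⟨i₂, j₂, hi₂, hj₂, hi₂n, hj₂n, hd₂⟩ := h₂
  set A := Finset.univ.image j₁
  set B := Finset.univ.image i₂
  have hA : A.card = k₁ := by simp [A, Finset.card_image_of_injective _ hj₁.injective]
  have hB : B.card = k₂ := by simp [B, Finset.card_image_of_injective _ hi₂.injective]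
  have hAB : (A ∪ B).card ≤ n := by
    refine (Finset.card_le_card fun a ha => ?_).trans_eq (Finset.card_range n)
    rcases Finset.mem_union.1 ha with ha | ha <;>
      obtain ⟨s, -, rfl⟩ := Finset.mem_image.1 ha <;> simp [hj₁n, hi₂n]
  have hcard : k₁ + k₂ - n ≤ (A ∩ B).card := by
    have := Finset.card_union_add_card_inter A B
    omega
  obtain ⟨g₁, hg₁, hj₁g₁⟩ := exists_strictMono_comp_eq_orderEmbOfFin hj₁ Finset.inter_subset_left
  obtain ⟨g₂, hg₂, hi₂g₂⟩ := exists_strictMono_comp_eq_orderEmbOfFin hi₂ Finset.inter_subset_right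
  refine HasMatchOfFit.mono ⟨i₁ ∘ g₁, j₂ ∘ g₂, hi₁.comp hg₁, hj₂.comp hg₂,
    fun _ => hi₁n _, fun _ => hj₂n _, fun t => ?_⟩ hcard
  calc dist (T^[i₁ (g₁ t)] x) (T^[j₂ (g₂ t)] z)
      ≤ dist (T^[i₁ (g₁ t)] x) (T^[j₁ (g₁ t)] w) + dist (T^[i₂ (g₂ t)] w) (T^[j₂ (g₂ t)] z) := by
        rw [hj₁g₁, hi₂g₂]; exact dist_triangle _ _ _
    _ < δ₁ + δ₂ := add_lt_add (hd₁ _) (hd₂ _)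

theorem hasMatchOfFit_self_iterate (hδ : 0 < δ) (k : ℕ) :
    HasMatchOfFit T δ n x (T^[k] x) (n - k) := by
  refine ⟨fun t => k + t, fun t => t, fun a b h => by simpa using h, fun a b h => h,
    fun t => by simp only; omega, fun t => by simp only; omega, fun t => ?_⟩
  rwa [← Function.iterate_add_apply, Nat.add_comm, dist_self]

theorem maxFit_def : maxFit T δ n x z = sSup {k | HasMatchOfFit T δ n x z k} := rfl

theorem bddAbove_hasMatchOfFit : BddAbove {k | HasMatchOfFit T δ n x z k} :=
  ⟨n, fun _ => HasMatchOfFit.le⟩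

theorem HasMatchOfFit.le_maxFit (h : HasMatchOfFit T δ n x z k) : k ≤ maxFit T δ n x z :=
  le_csSup bddAbove_hasMatchOfFit h

theorem hasMatchOfFit_maxFit : HasMatchOfFit T δ n x z (maxFit T δ n x z) :=
  Nat.sSup_mem ⟨0, hasMatchOfFit_zero⟩ bddAbove_hasMatchOfFit

theorem maxFit_le : maxFit T δ n x z ≤ n :=
  hasMatchOfFit_maxFit.le

theorem maxFit_comm : maxFit T δ n x z = maxFit T δ n z x := by
  simp only [maxFit_def, hasMatchOfFit_comm]

theorem maxFit_add_maxFit_le :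
    maxFit T δ₁ n x w + maxFit T δ₂ n w z ≤ maxFit T (δ₁ + δ₂) n x z + n := by
  have := ((hasMatchOfFit_maxFit (T := T) (δ := δ₁) (n := n) (x := x) (z := w)).trans
    (hasMatchOfFit_maxFit (δ := δ₂) (z := z))).le_maxFit
  omega

theorem fbarN_nonneg : 0 ≤ fbarN T δ n x z := by
  rw [fbarN, sub_nonneg]
  exact div_le_one_of_le₀ (mod_cast maxFit_le) n.cast_nonneg

theorem fbarN_le_one : fbarN T δ n x z ≤ 1 :=
  sub_le_self _ (by positivity)

theorem fbarN_comm : fbarN T δ n x z = fbarN T δ n z x := by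
  rw [fbarN, fbarN, maxFit_comm]

/-- The `n = 0` case holds because of the junk value `0 / 0 = 0`, which makes every `fbarN`
equal `1`. -/
theorem fbarN_add_le :
    fbarN T (δ₁ + δ₂) n x z ≤ fbarN T δ₁ n x w + fbarN T δ₂ n w z := by
  rcases n.eq_zero_or_pos with rfl | hn
  · simp [fbarN]
  have hn' : (0 : ℝ) < n := Nat.cast_pos.2 hn
  have key : (maxFit T δ₁ n x w + maxFit T δ₂ n w z : ℝ) ≤ maxFit T (δ₁ + δ₂) n x z + n := by
    exact_mod_cast maxFit_add_maxFit_le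
  have := div_le_div_of_nonneg_right key hn'.le
  rw [add_div, add_div, div_self hn'.ne'] at this
  simp only [fbarN]
  linarith

theorem fbarN_self_iterate_le (hδ : 0 < δ) (hkn : k ≤ n) (hn : 0 < n) :
    fbarN T δ n x (T^[k] x) ≤ k / n := by
  have hfit : ((n - k : ℕ) : ℝ) ≤ maxFit T δ n x (T^[k] x) :=
    Nat.cast_le.2 (hasMatchOfFit_self_iterate hδ k).le_maxFit
  rw [Nat.cast_sub hkn] at hfit
  have hn' : (0 : ℝ) < n := Nat.cast_pos.2 hn
  have := div_le_div_of_nonneg_right hfit hn'.le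
  rw [sub_div, div_self hn'.ne'] at this
  rw [fbarN]
  linarith

theorem isBoundedUnder_le_fbarN : IsBoundedUnder (· ≤ ·) atTop fun n => fbarN T δ n x z :=
  isBoundedUnder_of ⟨1, fun _ => fbarN_le_one⟩

theorem isBoundedUnder_ge_fbarN : IsBoundedUnder (· ≥ ·) atTop fun n => fbarN T δ n x z :=
  isBoundedUnder_of ⟨0, fun _ => fbarN_nonneg⟩

theorem fbar_le_one : fbar T δ x z ≤ 1 :=
  limsup_le_of_le isBoundedUnder_ge_fbarN.isCoboundedUnder_le
    (Eventually.of_forall fun _ => fbarN_le_one)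

theorem fbar_comm : fbar T δ x z = fbar T δ z x := by
  simp only [fbar, fbarN_comm]

theorem fbar_add_le : fbar T (δ₁ + δ₂) x z ≤ fbar T δ₁ x w + fbar T δ₂ w z :=
  (limsup_le_limsup (Eventually.of_forall fun _ => fbarN_add_le)
    isBoundedUnder_ge_fbarN.isCoboundedUnder_le
    (isBoundedUnder_le_add isBoundedUnder_le_fbarN isBoundedUnder_le_fbarN)).trans
  (limsup_add_le isBoundedUnder_ge_fbarN isBoundedUnder_le_fbarN
    isBoundedUnder_ge_fbarN.isCoboundedUnder_le isBoundedUnder_le_fbarN)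

theorem fbar_self_iterate_nonpos (hδ : 0 < δ) (k : ℕ) : fbar T δ x (T^[k] x) ≤ 0 := by
  have hlim : Tendsto (fun n : ℕ => (k : ℝ) / n) atTop (𝓝 0) :=
    tendsto_const_div_atTop_nhds_zero_nat (k : ℝ)
  have hle : ∀ᶠ n in atTop, fbarN T δ n x (T^[k] x) ≤ (k : ℝ) / n := by
    filter_upwards [eventually_ge_atTop (k + 1)] with n hn
    exact fbarN_self_iterate_le hδ (by omega) (by omega)
  calc fbar T δ x (T^[k] x)
      ≤ limsup (fun n : ℕ => (k : ℝ) / n) atTop :=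
        limsup_le_limsup hle isBoundedUnder_ge_fbarN.isCoboundedUnder_le hlim.isBoundedUnder_le
    _ = 0 := hlim.limsup_eq

theorem rhoFK_nonneg : 0 ≤ rhoFK T x z :=
  Real.sInf_nonneg fun _ hδ => hδ.1.le

theorem rhoFK_le_of_fbar_lt (hδ : 0 < δ) (h : fbar T δ x z < δ) : rhoFK T x z ≤ δ :=
  csInf_le ⟨0, fun _ hδ => hδ.1.le⟩ ⟨hδ, h⟩

theorem nonempty_rhoFK_set : {δ : ℝ | 0 < δ ∧ fbar T δ x z < δ}.Nonempty :=
  ⟨2, two_pos, fbar_le_one.trans_lt one_lt_two⟩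

theorem rhoFK_comm : rhoFK T x z = rhoFK T z x := by
  simp only [rhoFK, fbar_comm]

theorem rhoFK_triangle : rhoFK T x z ≤ rhoFK T x w + rhoFK T w z := by
  suffices h : ∀ δ₁ δ₂, 0 < δ₁ → fbar T δ₁ x w < δ₁ → 0 < δ₂ → fbar T δ₂ w z < δ₂ →
      rhoFK T x z ≤ δ₁ + δ₂ by
    have h₂ : ∀ δ₂, 0 < δ₂ → fbar T δ₂ w z < δ₂ → rhoFK T x z - δ₂ ≤ rhoFK T x w :=
      fun δ₂ hδ₂ hf₂ => le_csInf nonempty_rhoFK_set fun δ₁ ⟨hδ₁, hf₁⟩ => by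
        linarith [h δ₁ δ₂ hδ₁ hf₁ hδ₂ hf₂]
    have : rhoFK T x z - rhoFK T x w ≤ rhoFK T w z :=
      le_csInf nonempty_rhoFK_set fun δ₂ ⟨hδ₂, hf₂⟩ => by linarith [h₂ δ₂ hδ₂ hf₂]
    linarith
  intro δ₁ δ₂ hδ₁ hf₁ hδ₂ hf₂
  exact rhoFK_le_of_fbar_lt (add_pos hδ₁ hδ₂) (fbar_add_le.trans_lt (add_lt_add hf₁ hf₂))

theorem rhoFK_self_iterate (k : ℕ) : rhoFK T x (T^[k] x) = 0 :=
  le_antisymm (le_of_forall_pos_le_add fun ε hε => by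
    rw [zero_add]
    exact rhoFK_le_of_fbar_lt hε ((fbar_self_iterate_nonpos hε k).trans_lt hε)) rhoFK_nonneg

theorem rhoFK_le_rhoFK_iterate (k : ℕ) : rhoFK T x z ≤ rhoFK T (T^[k] x) (T^[k] z) :=
  calc rhoFK T x z ≤ rhoFK T x (T^[k] x) + rhoFK T (T^[k] x) z := rhoFK_triangle
    _ ≤ rhoFK T x (T^[k] x) + (rhoFK T (T^[k] x) (T^[k] z) + rhoFK T (T^[k] z) z) :=
      add_le_add le_rfl rhoFK_triangle
    _ = rhoFK T (T^[k] x) (T^[k] z) := by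
      rw [rhoFK_comm (x := T^[k] z), rhoFK_self_iterate, rhoFK_self_iterate, zero_add, add_zero]

end FKPaper

theorem fkContinuityPoint_of_mem_orbit_closure_general {X : Type*} [MetricSpace X]
    (T : X → X) (hT : Continuous T) (x y : X)
    (hy : FKContinuityPoint T y)
    (hyx : y ∈ closure {z : X | ∃ n : ℕ, T^[n] x = z}) :
    FKContinuityPoint T x ∧ rhoFK T x y = 0 := by
  have orbit_near_y : ∀ δ > 0, ∃ n, dist y (T^[n] x) < δ :=
    Metric.mem_closure_range_iff.1 hyx
  refine ⟨fun ε hε => ?_, ?_⟩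
  · obtain ⟨δ, hδ, hδy⟩ := hy (ε / 2) (half_pos hε)
    obtain ⟨n, hn⟩ := orbit_near_y (δ / 2) (half_pos hδ)
    have hxn : dist y (T^[n] x) ≤ δ := by linarith
    obtain ⟨δ', hδ', hδ'n⟩ := Metric.continuous_iff.1 (hT.iterate n) x (δ / 2) (half_pos hδ)
    refine ⟨δ' / 2, half_pos hδ', fun z hz => ?_⟩
    have hzn : dist y (T^[n] z) ≤ δ := by
      have := hδ'n z (by rw [dist_comm]; linarith)
      linarith [dist_triangle y (T^[n] x) (T^[n] z), dist_comm (T^[n] z) (T^[n] x)]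
    calc rhoFK T x z ≤ rhoFK T (T^[n] x) (T^[n] z) := rhoFK_le_rhoFK_iterate n
      _ ≤ rhoFK T y (T^[n] x) + rhoFK T y (T^[n] z) := by
          rw [← rhoFK_comm (z := y)]; exact rhoFK_triangle
      _ ≤ ε / 2 + ε / 2 := add_le_add (hδy _ hxn) (hδy _ hzn)
      _ = ε := add_halves ε
  · refine le_antisymm (le_of_forall_pos_le_add fun ε hε => ?_) rhoFK_nonneg
    obtain ⟨δ, hδ, hδy⟩ := hy ε hε
    obtain ⟨n, hn⟩ := orbit_near_y δ hδ
    calc rhoFK T x y ≤ rhoFK T x (T^[n] x) + rhoFK T (T^[n] x) y := rhoFK_triangle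
      _ ≤ 0 + ε := by rw [rhoFK_self_iterate, rhoFK_comm]; exact add_le_add le_rfl (hδy _ hn.le)

/-- an FK-continuity point in the orbit closure of `x` makes `x`
an FK-continuity point, at `ρ_FK`-distance zero. -/
theorem fkContinuityPoint_of_mem_orbit_closure {X : Type*} [MetricSpace X] [CompactSpace X] [Nonempty X]
    (T : X → X) (hT : Continuous T) (x y : X)
    (hy : FKContinuityPoint T y)
    (hyx : y ∈ closure {z : X | ∃ n : ℕ, T^[n] x = z}) :
    FKContinuityPoint T x ∧ rhoFK T x y = 0 :=
  fkContinuityPoint_of_mem_orbit_closure_general T hT x y hy hyx
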